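/- arXiv:1805.08753 — 8 statements merged into one kernel-verified Lean document; each statement's English description precedes it below -/
import Mathlib

section
/- If (A, μ) is a totally associative ternary algebra (i.e., μ(μ(x₁,x₂,x₃),x₄,x₅) = μ(x₁,μ(x₂,x₃,x₄),x₅) = μ(x₁,x₂,μ(x₃,x₄,x₅)) for all xᵢ), and ρ : A → A is an algebra endomorphism (ρ(μ(x,y,z)) = μ(ρx,ρy,ρz)), then (A, μ_ρ, ρ, ρ) with μ_ρ = ρ ∘ μ is a totally hom-associative ternary algebra, i.e., μ_ρ(μ_ρ(x₁,x₂,x₃), ρ(x₄), ρ(x₅)) = μ_ρ(ρ(x₁), μ_ρ(x₂,x₃,x₄), ρ(x₅)) = μ_ρ(ρ(x₁), ρ(x₂), μ_ρ(x₃,x₄,x₅)). -/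
theorem stmt0_general {K A : Type*} [Field K] [AddCommGroup A] [Module K A]
    (μ : A →ₗ[K] A →ₗ[K] A →ₗ[K] A)
    (htot : ∀ x₁ x₂ x₃ x₄ x₅ : A,
      μ (μ x₁ x₂ x₃) x₄ x₅ = μ x₁ (μ x₂ x₃ x₄) x₅ ∧
      μ x₁ (μ x₂ x₃ x₄) x₅ = μ x₁ x₂ (μ x₃ x₄ x₅))
    (ρ : A →ₗ[K] A)
    (hρ : ∀ x y z : A, ρ (μ x y z) = μ (ρ x) (ρ y) (ρ z)) :
    ∀ x₁ x₂ x₃ x₄ x₅ : A,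
      ρ (μ (ρ (μ x₁ x₂ x₃)) (ρ x₄) (ρ x₅)) = ρ (μ (ρ x₁) (ρ (μ x₂ x₃ x₄)) (ρ x₅)) ∧
      ρ (μ (ρ x₁) (ρ (μ x₂ x₃ x₄)) (ρ x₅)) = ρ (μ (ρ x₁) (ρ x₂) (ρ (μ x₃ x₄ x₅))) := by
  intro x₁ x₂ x₃ x₄ x₅
  -- As `ρ` is multiplicative, each side is `ρ (ρ _)` of a bracketing of `x₁ … x₅`; `htot` right-nests them all.
  simp only [← hρ, htot, and_self]

/-- Twisting a totally associative ternary algebra by an endomorphism `ρ`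
yields a totally hom-associative ternary algebra `(A, ρ ∘ μ, ρ, ρ)`. -/
theorem stmt0 {K A : Type*} [Field K] [CharZero K] [AddCommGroup A] [Module K A]
    (μ : A →ₗ[K] A →ₗ[K] A →ₗ[K] A)
    (htot : ∀ x₁ x₂ x₃ x₄ x₅ : A,
      μ (μ x₁ x₂ x₃) x₄ x₅ = μ x₁ (μ x₂ x₃ x₄) x₅ ∧
      μ x₁ (μ x₂ x₃ x₄) x₅ = μ x₁ x₂ (μ x₃ x₄ x₅))
    (ρ : A →ₗ[K] A)
    (hρ : ∀ x y z : A, ρ (μ x y z) = μ (ρ x) (ρ y) (ρ z)) :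
    ∀ x₁ x₂ x₃ x₄ x₅ : A,
      ρ (μ (ρ (μ x₁ x₂ x₃)) (ρ x₄) (ρ x₅)) = ρ (μ (ρ x₁) (ρ (μ x₂ x₃ x₄)) (ρ x₅)) ∧
      ρ (μ (ρ x₁) (ρ (μ x₂ x₃ x₄)) (ρ x₅)) = ρ (μ (ρ x₁) (ρ x₂) (ρ (μ x₃ x₄ x₅))) :=
  stmt0_general μ htot ρ hρ
end

section
/- If (A, μ) is a partially associative ternary algebra (i.e., μ(μ(x₁,x₂,x₃),x₄,x₅) + μ(x₁,μ(x₂,x₃,x₄),x₅) + μ(x₁,x₂,μ(x₃,x₄,x₅)) = 0 for all xᵢ), and ρ : A → A is an algebra endomorphism, then (A, ρ ∘ μ, ρ, ρ) is a partially hom-associative ternary algebra: (ρ∘μ)((ρ∘μ)(x₁,x₂,x₃), ρ(x₄), ρ(x₅)) + (ρ∘μ)(ρ(x₁), (ρ∘μ)(x₂,x₃,x₄), ρ(x₅)) + (ρ∘μ)(ρ(x₁), ρ(x₂), (ρ∘μ)(x₃,x₄,x₅)) = 0. -/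
theorem stmt1_general {K A : Type*} [Field K] [AddCommGroup A] [Module K A]
    (μ : A →ₗ[K] A →ₗ[K] A →ₗ[K] A)
    (hpar : ∀ x₁ x₂ x₃ x₄ x₅ : A,
      μ (μ x₁ x₂ x₃) x₄ x₅ + μ x₁ (μ x₂ x₃ x₄) x₅ + μ x₁ x₂ (μ x₃ x₄ x₅) = 0)
    (ρ : A →ₗ[K] A)
    (hρ : ∀ x y z : A, ρ (μ x y z) = μ (ρ x) (ρ y) (ρ z)) :
    ∀ x₁ x₂ x₃ x₄ x₅ : A,
      ρ (μ (ρ (μ x₁ x₂ x₃)) (ρ x₄) (ρ x₅)) + ρ (μ (ρ x₁) (ρ (μ x₂ x₃ x₄)) (ρ x₅))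
        + ρ (μ (ρ x₁) (ρ x₂) (ρ (μ x₃ x₄ x₅))) = 0 := by
  intro x₁ x₂ x₃ x₄ x₅
  -- Pushing `ρ` through every product leaves the partial associativity identity at the `ρ (ρ xᵢ)`.
  simp only [hρ]
  exact hpar (ρ (ρ x₁)) (ρ (ρ x₂)) (ρ (ρ x₃)) (ρ (ρ x₄)) (ρ (ρ x₅))

/-- Twisting a partially associative ternary algebra by an endomorphism `ρ`
yields a partially hom-associative ternary algebra `(A, ρ ∘ μ, ρ, ρ)`. -/
theorem stmt1 {K A : Type*} [Field K] [CharZero K] [AddCommGroup A] [Module K A]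
    (μ : A →ₗ[K] A →ₗ[K] A →ₗ[K] A)
    (hpar : ∀ x₁ x₂ x₃ x₄ x₅ : A,
      μ (μ x₁ x₂ x₃) x₄ x₅ + μ x₁ (μ x₂ x₃ x₄) x₅ + μ x₁ x₂ (μ x₃ x₄ x₅) = 0)
    (ρ : A →ₗ[K] A)
    (hρ : ∀ x y z : A, ρ (μ x y z) = μ (ρ x) (ρ y) (ρ z)) :
    ∀ x₁ x₂ x₃ x₄ x₅ : A,
      ρ (μ (ρ (μ x₁ x₂ x₃)) (ρ x₄) (ρ x₅)) + ρ (μ (ρ x₁) (ρ (μ x₂ x₃ x₄)) (ρ x₅))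
        + ρ (μ (ρ x₁) (ρ x₂) (ρ (μ x₃ x₄ x₅))) = 0 :=
  stmt1_general μ hpar ρ hρ
end

section
/- Let P be a 2-dimensional K-vector space with basis {e₁, e₂}, trilinear product μ with μ(e₁,e₁,e₁) = e₂ and all other basis products zero. For a, b ∈ K with a ≠ 0, the linear map ρ with ρ(e₁) = a·e₁ + b·e₂ and ρ(e₂) = a³·e₂ is an automorphism of (P, μ), i.e., ρ is bijective and ρ(μ(x,y,z)) = μ(ρ(x), ρ(y), ρ(z)) for all x, y, z ∈ P. -/
/-!
Expanding in the basis, the only nonzero structure constant gives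
`μ(x, y, z) = x₁ y₁ z₁ e₂`, and `ρ(x) = (a x₁, b x₁ + a³ x₂)`. The first coordinate of `ρ(x)` is
`a x₁`, so `ρ(μ(x, y, z)) = a³ x₁ y₁ z₁ e₂ = μ(ρ x, ρ y, ρ z)`; and `ρ` is triangular with
diagonal `a, a³`, hence bijective when `a ≠ 0`.
-/

section StandardBasis

variable {R M : Type*} [CommRing R] [AddCommGroup M] [Module R M]
  {e : Fin 2 → R × R} (he0 : e 0 = (1, 0)) (he1 : e 1 = (0, 1))
include he0 he1

theorem Prod.eq_fst_smul_add_snd_smul (v : R × R) : v = v.1 • e 0 + v.2 • e 1 := by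
  ext <;> simp [he0, he1]

theorem LinearMap.apply_eq_fst_smul_add_snd_smul (f : R × R →ₗ[R] M) (v : R × R) :
    f v = v.1 • f (e 0) + v.2 • f (e 1) := by
  conv_lhs => rw [Prod.eq_fst_smul_add_snd_smul he0 he1 v]
  rw [map_add, map_smul, map_smul]

theorem LinearMap.trilinear_apply_eq_of_single_structure_constant
    (μ : R × R →ₗ[R] R × R →ₗ[R] R × R →ₗ[R] M) (m : M)
    (hμ : ∀ i j k : Fin 2, μ (e i) (e j) (e k) = if i = 0 ∧ j = 0 ∧ k = 0 then m else 0)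
    (x y z : R × R) : μ x y z = (x.1 * y.1 * z.1) • m := by
  rw [μ.apply_eq_fst_smul_add_snd_smul he0 he1 x]
  simp only [LinearMap.add_apply, LinearMap.smul_apply,
    LinearMap.apply_eq_fst_smul_add_snd_smul he0 he1 _ y,
    LinearMap.apply_eq_fst_smul_add_snd_smul he0 he1 _ z, hμ]
  simp [smul_smul, mul_comm, mul_left_comm]

theorem LinearMap.apply_eq_of_basis_images (ρ : R × R →ₗ[R] R × R) {a b c : R}
    (hρ0 : ρ (e 0) = a • e 0 + b • e 1) (hρ1 : ρ (e 1) = c • e 1) (v : R × R) :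
    ρ v = (a * v.1, b * v.1 + c * v.2) := by
  rw [ρ.apply_eq_fst_smul_add_snd_smul he0 he1, hρ0, hρ1, he0, he1]
  ext <;> simp [mul_comm]

end StandardBasis

theorem LinearMap.bijective_of_lowerTriangular {K : Type*} [Field K] (f : K × K →ₗ[K] K × K)
    {a b c : K} (ha : a ≠ 0) (hc : c ≠ 0) (hf : ∀ v, f v = (a * v.1, b * v.1 + c * v.2)) :
    Function.Bijective f := by
  have hinj : Function.Injective f := by
    refine (injective_iff_map_eq_zero f).2 fun v hv => ?_
    rw [hf, Prod.mk_eq_zero] at hv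
    have hv1 : v.1 = 0 := (mul_eq_zero.1 hv.1).resolve_left ha
    simp only [hv1, mul_zero, zero_add] at hv
    exact Prod.ext hv1 ((mul_eq_zero.1 hv.2).resolve_left hc)
  exact ⟨hinj, LinearMap.injective_iff_surjective.1 hinj⟩

theorem stmt4_general {K : Type*} [Field K]
    (μ : (K × K) →ₗ[K] (K × K) →ₗ[K] (K × K) →ₗ[K] (K × K))
    (e : Fin 2 → K × K) (he0 : e 0 = (1, 0)) (he1 : e 1 = (0, 1))
    (hμ : ∀ i j k : Fin 2, μ (e i) (e j) (e k) =
      if i = 0 ∧ j = 0 ∧ k = 0 then e 1 else 0)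
    (a b : K) (ha : a ≠ 0)
    (ρ : (K × K) →ₗ[K] (K × K))
    (hρ0 : ρ (e 0) = a • e 0 + b • e 1) (hρ1 : ρ (e 1) = a ^ 3 • e 1) :
    Function.Bijective ρ ∧ ∀ x y z : K × K, ρ (μ x y z) = μ (ρ x) (ρ y) (ρ z) := by
  have hρ := ρ.apply_eq_of_basis_images he0 he1 hρ0 hρ1
  have hμ' := μ.trilinear_apply_eq_of_single_structure_constant he0 he1 (e 1) hμ
  refine ⟨ρ.bijective_of_lowerTriangular ha (pow_ne_zero 3 ha) hρ, fun x y z => ?_⟩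
  rw [hμ', hμ', map_smul, hρ1, hρ, hρ, hρ, smul_smul]
  congr 1
  ring

/-- For `a ≠ 0`, the linear map `ρ(e₁) = a e₁ + b e₂`, `ρ(e₂) = a³ e₂` is an
automorphism of the partially associative ternary algebra with `μ(e₁,e₁,e₁) = e₂`. -/
theorem stmt4 {K : Type*} [Field K] [CharZero K]
    (μ : (K × K) →ₗ[K] (K × K) →ₗ[K] (K × K) →ₗ[K] (K × K))
    (e : Fin 2 → K × K) (he0 : e 0 = (1, 0)) (he1 : e 1 = (0, 1))
    (hμ : ∀ i j k : Fin 2, μ (e i) (e j) (e k) =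
      if i = 0 ∧ j = 0 ∧ k = 0 then e 1 else 0)
    (a b : K) (ha : a ≠ 0)
    (ρ : (K × K) →ₗ[K] (K × K))
    (hρ0 : ρ (e 0) = a • e 0 + b • e 1) (hρ1 : ρ (e 1) = a ^ 3 • e 1) :
    Function.Bijective ρ ∧ ∀ x y z : K × K, ρ (μ x y z) = μ (ρ x) (ρ y) (ρ z) :=
  stmt4_general μ e he0 he1 hμ a b ha ρ hρ0 hρ1
end

section
/- Let T be a 2-dimensional vector space with basis {e₁, e₂} and trilinear product μ defined by μ(e₁,e₁,e₁)=e₁, μ(e₁,e₁,e₂)=μ(e₁,e₂,e₁)=μ(e₂,e₁,e₁)=e₂, μ(e₂,e₂,e₁)=μ(e₁,e₂,e₂)=μ(e₂,e₁,e₂)=e₁+e₂, μ(e₂,e₂,e₂)=e₁+2e₂. Then (T, μ) is a totally associative ternary algebra: μ(μ(x₁,x₂,x₃),x₄,x₅) = μ(x₁,μ(x₂,x₃,x₄),x₅) = μ(x₁,x₂,μ(x₃,x₄,x₅)) for all xᵢ ∈ T. -/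
/-!
Identify `(a, b) : K × K` with `a + b φ` in the commutative ring `K[φ]/(φ² - φ - 1)`, so that
`e₀ = 1` and `e₁ = φ`. The multiplication table says exactly that `μ x y z = x y z` on basis
vectors (e.g. `φ³ = φ + φ² = 1 + 2φ`), hence everywhere by trilinearity, and total
associativity of `μ` is associativity of this ring product.
-/

open Module

section
variable {K : Type*} [CommRing K]

def goldenMul (x y : K × K) : K × K :=
  (x.1 * y.1 + x.2 * y.2, x.1 * y.2 + x.2 * y.1 + x.2 * y.2)

theorem goldenMul_assoc (x y z : K × K) :
    goldenMul (goldenMul x y) z = goldenMul x (goldenMul y z) := by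
  ext <;> simp only [goldenMul] <;> ring

theorem trilinear_eq_goldenMul_of_basis
    (μ : (K × K) →ₗ[K] (K × K) →ₗ[K] (K × K) →ₗ[K] (K × K))
    (h : ∀ i j k, μ (Basis.finTwoProd K i) (Basis.finTwoProd K j) (Basis.finTwoProd K k) =
      goldenMul (goldenMul (Basis.finTwoProd K i) (Basis.finTwoProd K j))
        (Basis.finTwoProd K k))
    (x y z : K × K) : μ x y z = goldenMul (goldenMul x y) z := by
  have hv (v : K × K) : v = v.1 • Basis.finTwoProd K 0 + v.2 • Basis.finTwoProd K 1 := by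
    ext <;> simp
  rw [hv x, hv y, hv z]
  simp only [map_add, map_smul, LinearMap.add_apply, LinearMap.smul_apply, h]
  simp only [goldenMul, Basis.finTwoProd_zero, Basis.finTwoProd_one]
  ext <;> simp only [Prod.fst_add, Prod.snd_add, Prod.smul_fst, Prod.smul_snd, smul_eq_mul] <;> ring

end

theorem stmt5_general {K : Type*} [Field K]
    (μ : (K × K) →ₗ[K] (K × K) →ₗ[K] (K × K) →ₗ[K] (K × K))
    (e : Fin 2 → K × K) (he0 : e 0 = (1, 0)) (he1 : e 1 = (0, 1))
    (h111 : μ (e 0) (e 0) (e 0) = e 0)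
    (h112 : μ (e 0) (e 0) (e 1) = e 1)
    (h121 : μ (e 0) (e 1) (e 0) = e 1)
    (h211 : μ (e 1) (e 0) (e 0) = e 1)
    (h221 : μ (e 1) (e 1) (e 0) = e 0 + e 1)
    (h122 : μ (e 0) (e 1) (e 1) = e 0 + e 1)
    (h212 : μ (e 1) (e 0) (e 1) = e 0 + e 1)
    (h222 : μ (e 1) (e 1) (e 1) = e 0 + (2 : K) • e 1) :
    ∀ x₁ x₂ x₃ x₄ x₅ : K × K,
      μ (μ x₁ x₂ x₃) x₄ x₅ = μ x₁ (μ x₂ x₃ x₄) x₅ ∧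
      μ x₁ (μ x₂ x₃ x₄) x₅ = μ x₁ x₂ (μ x₃ x₄ x₅) := by
  obtain rfl : e = Basis.finTwoProd K := by
    funext i; fin_cases i <;> simp [he0, he1]
  have hμ := trilinear_eq_goldenMul_of_basis μ fun i j k ↦ by
    fin_cases i <;> fin_cases j <;> fin_cases k <;>
      simp_all [goldenMul, one_add_one_eq_two]
  intro x₁ x₂ x₃ x₄ x₅
  simp only [hμ, goldenMul_assoc, and_self]

/-- The 2-dimensional ternary algebra with the given multiplication table is
totally associative. -/
theorem stmt5 {K : Type*} [Field K] [CharZero K]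
    (μ : (K × K) →ₗ[K] (K × K) →ₗ[K] (K × K) →ₗ[K] (K × K))
    (e : Fin 2 → K × K) (he0 : e 0 = (1, 0)) (he1 : e 1 = (0, 1))
    (h111 : μ (e 0) (e 0) (e 0) = e 0)
    (h112 : μ (e 0) (e 0) (e 1) = e 1)
    (h121 : μ (e 0) (e 1) (e 0) = e 1)
    (h211 : μ (e 1) (e 0) (e 0) = e 1)
    (h221 : μ (e 1) (e 1) (e 0) = e 0 + e 1)
    (h122 : μ (e 0) (e 1) (e 1) = e 0 + e 1)
    (h212 : μ (e 1) (e 0) (e 1) = e 0 + e 1)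
    (h222 : μ (e 1) (e 1) (e 1) = e 0 + (2 : K) • e 1) :
    ∀ x₁ x₂ x₃ x₄ x₅ : K × K,
      μ (μ x₁ x₂ x₃) x₄ x₅ = μ x₁ (μ x₂ x₃ x₄) x₅ ∧
      μ x₁ (μ x₂ x₃ x₄) x₅ = μ x₁ x₂ (μ x₃ x₄ x₅) :=
  stmt5_general μ e he0 he1 h111 h112 h121 h211 h221 h122 h212 h222
end

section
/- Let A be a finite-dimensional K-vector space with trilinear map μ : A×A×A → A and linear maps α₁, α₂ : A → A. Then (A, μ, α₁, α₂) is a partially hom-associative ternary algebra if and only if the dual (A*, μ*, α₁*, α₂*) is a partially hom-coassociative ternary coalgebra, where μ* : A* → A*⊗A*⊗A* is defined by ⟨μ*(ξ), x⊗y⊗z⟩ = ⟨ξ, μ(x,y,z)⟩ and α* is the dual map. -/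
/-! Pair `(A*)^⊗5` with `A^⊗5` by iterating `dualDistrib`. On `x₁ ⊗ ⋯ ⊗ x₅`, the coassociator
of `μ*` applied to `ξ` evaluates to `ξ` of the hom-associator of `μ` at `(x₁, …, x₅)`, because each
of its three terms is dual to the corresponding term of the associator. In finite dimension
this pairing is injective, and linear functionals separate points, so one side vanishes iff the
other does. -/

open TensorProduct Module

/-- `(Δ ⊗ α₁ ⊗ α₂)` reassociated to land in the right-nested 5-fold tensor power. -/
noncomputable def coassoc1 {K M : Type*} [Field K] [AddCommGroup M] [Module K M]
    (Δ : M →ₗ[K] M ⊗[K] (M ⊗[K] M)) (α₁ α₂ : M →ₗ[K] M) :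
    (M ⊗[K] (M ⊗[K] M)) →ₗ[K] (M ⊗[K] (M ⊗[K] (M ⊗[K] (M ⊗[K] M)))) :=
  (TensorProduct.map (LinearMap.id : M →ₗ[K] M)
      (TensorProduct.assoc K M M (M ⊗[K] M)).toLinearMap).comp
    ((TensorProduct.assoc K M (M ⊗[K] M) (M ⊗[K] M)).toLinearMap.comp
      (TensorProduct.map Δ (TensorProduct.map α₁ α₂)))

/-- `(α₁ ⊗ Δ ⊗ α₂)` reassociated to land in the right-nested 5-fold tensor power. -/
noncomputable def coassoc2 {K M : Type*} [Field K] [AddCommGroup M] [Module K M]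
    (Δ : M →ₗ[K] M ⊗[K] (M ⊗[K] M)) (α₁ α₂ : M →ₗ[K] M) :
    (M ⊗[K] (M ⊗[K] M)) →ₗ[K] (M ⊗[K] (M ⊗[K] (M ⊗[K] (M ⊗[K] M)))) :=
  (TensorProduct.map (LinearMap.id : M →ₗ[K] M)
      ((TensorProduct.map (LinearMap.id : M →ₗ[K] M)
          (TensorProduct.assoc K M M M).toLinearMap).comp
        (TensorProduct.assoc K M (M ⊗[K] M) M).toLinearMap)).comp
    (TensorProduct.map α₁ (TensorProduct.map Δ α₂))

/-- `(α₁ ⊗ α₂ ⊗ Δ)`. -/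
noncomputable def coassoc3 {K M : Type*} [Field K] [AddCommGroup M] [Module K M]
    (Δ : M →ₗ[K] M ⊗[K] (M ⊗[K] M)) (α₁ α₂ : M →ₗ[K] M) :
    (M ⊗[K] (M ⊗[K] M)) →ₗ[K] (M ⊗[K] (M ⊗[K] (M ⊗[K] (M ⊗[K] M)))) :=
  TensorProduct.map α₁ (TensorProduct.map α₂ Δ)

/-- The natural pairing `A* ⊗ A* ⊗ A* → (A ⊗ A ⊗ A)*`. -/
noncomputable def pair3 (K M : Type*) [Field K] [AddCommGroup M] [Module K M] :
    (Dual K M ⊗[K] (Dual K M ⊗[K] Dual K M)) →ₗ[K] Dual K (M ⊗[K] (M ⊗[K] M)) :=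
  (TensorProduct.dualDistrib K M (M ⊗[K] M)).comp
    (TensorProduct.map (LinearMap.id : Dual K M →ₗ[K] Dual K M)
      (TensorProduct.dualDistrib K M M))

noncomputable def pair5 (K M : Type*) [Field K] [AddCommGroup M] [Module K M] :
    (Dual K M ⊗[K] (Dual K M ⊗[K] (Dual K M ⊗[K] (Dual K M ⊗[K] Dual K M)))) →ₗ[K]
      Dual K (M ⊗[K] (M ⊗[K] (M ⊗[K] (M ⊗[K] M)))) :=
  (TensorProduct.dualDistrib K M (M ⊗[K] (M ⊗[K] (M ⊗[K] M)))).comp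
    (TensorProduct.map (LinearMap.id : Dual K M →ₗ[K] Dual K M)
      ((TensorProduct.dualDistrib K M (M ⊗[K] (M ⊗[K] M))).comp
        (TensorProduct.map (LinearMap.id : Dual K M →ₗ[K] Dual K M) (pair3 K M))))

theorem dualDistrib_injective {R M N : Type*} [CommRing R] [AddCommGroup M] [Module R M]
    [Module.Free R M] [Module.Finite R M] [AddCommGroup N] [Module R N] [Module.Free R N]
    [Module.Finite R N] : Function.Injective (dualDistrib R M N) :=
  (dualDistribEquiv R M N).injective

theorem map_id_injective {R M N P : Type*} [CommSemiring R] [AddCommMonoid M] [Module R M]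
    [Module.Flat R M] [AddCommMonoid N] [Module R N] [AddCommMonoid P] [Module R P]
    {f : N →ₗ[R] P} (hf : Function.Injective f) :
    Function.Injective (TensorProduct.map (LinearMap.id : M →ₗ[R] M) f) :=
  Module.Flat.lTensor_preserves_injective_linearMap f hf

section Pairing

variable {K M : Type*} [Field K] [AddCommGroup M] [Module K M]

theorem pair3_injective [FiniteDimensional K M] : Function.Injective (pair3 K M) :=
  dualDistrib_injective.comp (map_id_injective dualDistrib_injective)

theorem pair5_injective [FiniteDimensional K M] : Function.Injective (pair5 K M) :=
  dualDistrib_injective.comp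
    (map_id_injective (dualDistrib_injective.comp (map_id_injective pair3_injective)))

theorem pair3_tmul (f g h : Dual K M) (x y z : M) :
    pair3 K M (f ⊗ₜ (g ⊗ₜ h)) (x ⊗ₜ (y ⊗ₜ z)) = f x * (g y * h z) := by
  simp [pair3, dualDistrib_apply]

theorem pair5_tmul_tmul (f g : Dual K M) (u : Dual K M ⊗[K] (Dual K M ⊗[K] Dual K M))
    (x y : M) (w : M ⊗[K] (M ⊗[K] M)) :
    pair5 K M (f ⊗ₜ (g ⊗ₜ u)) (x ⊗ₜ (y ⊗ₜ w)) = f x * (g y * pair3 K M u w) := by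
  simp [pair5, dualDistrib_apply]

end Pairing

section Coassociator

variable {K M : Type*} [Field K] [AddCommGroup M] [Module K M]
  (Δ : Dual K M →ₗ[K] Dual K M ⊗[K] (Dual K M ⊗[K] Dual K M)) (β₁ β₂ : Dual K M →ₗ[K] Dual K M)

theorem pair5_coassoc1_tmul (f g h : Dual K M) (x₁ x₂ x₃ x₄ x₅ : M) :
    pair5 K M (coassoc1 Δ β₁ β₂ (f ⊗ₜ (g ⊗ₜ h))) (x₁ ⊗ₜ (x₂ ⊗ₜ (x₃ ⊗ₜ (x₄ ⊗ₜ x₅)))) =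
      pair3 K M (Δ f) (x₁ ⊗ₜ (x₂ ⊗ₜ x₃)) * (β₁ g x₄ * β₂ h x₅) := by
  simp only [coassoc1, LinearMap.comp_apply, map_tmul]
  induction Δ f using TensorProduct.induction_on with
  | zero => simp
  | add u v hu hv => simp only [add_tmul, map_add, LinearMap.add_apply, hu, hv, add_mul]
  | tmul f' v =>
    induction v using TensorProduct.induction_on with
    | zero => simp
    | add v w hv hw => simp only [tmul_add, add_tmul, map_add, LinearMap.add_apply, hv, hw, add_mul]
    | tmul g' h' => simp [pair5_tmul_tmul, pair3_tmul, mul_assoc]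

theorem pair5_coassoc2_tmul (f g h : Dual K M) (x₁ x₂ x₃ x₄ x₅ : M) :
    pair5 K M (coassoc2 Δ β₁ β₂ (f ⊗ₜ (g ⊗ₜ h))) (x₁ ⊗ₜ (x₂ ⊗ₜ (x₃ ⊗ₜ (x₄ ⊗ₜ x₅)))) =
      β₁ f x₁ * (pair3 K M (Δ g) (x₂ ⊗ₜ (x₃ ⊗ₜ x₄)) * β₂ h x₅) := by
  simp only [coassoc2, LinearMap.comp_apply, map_tmul, LinearMap.id_apply]
  induction Δ g using TensorProduct.induction_on with
  | zero => simp
  | add u v hu hv =>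
    simp only [add_tmul, tmul_add, map_add, LinearMap.add_apply, hu, hv, add_mul, mul_add]
  | tmul f' v =>
    induction v using TensorProduct.induction_on with
    | zero => simp
    | add v w hv hw =>
      simp only [tmul_add, add_tmul, map_add, LinearMap.add_apply, hv, hw, add_mul, mul_add]
    | tmul g' h' => simp [pair5_tmul_tmul, pair3_tmul, mul_assoc]

theorem pair5_coassoc3_tmul (f g h : Dual K M) (x₁ x₂ x₃ x₄ x₅ : M) :
    pair5 K M (coassoc3 Δ β₁ β₂ (f ⊗ₜ (g ⊗ₜ h))) (x₁ ⊗ₜ (x₂ ⊗ₜ (x₃ ⊗ₜ (x₄ ⊗ₜ x₅)))) =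
      β₁ f x₁ * (β₂ g x₂ * pair3 K M (Δ h) (x₃ ⊗ₜ (x₄ ⊗ₜ x₅))) :=
  pair5_tmul_tmul ..

end Coassociator

section DualOfTernaryAlgebra

variable {K A : Type*} [Field K] [AddCommGroup A] [Module K A]
  (μ : A →ₗ[K] A →ₗ[K] A →ₗ[K] A) (α₁ α₂ : A →ₗ[K] A)
  (μstar : Dual K A →ₗ[K] Dual K A ⊗[K] (Dual K A ⊗[K] Dual K A))

theorem pair5_coassociator_apply
    (hμstar : ∀ (ξ : Dual K A) (x y z : A),
      pair3 K A (μstar ξ) (x ⊗ₜ[K] (y ⊗ₜ[K] z)) = ξ (μ x y z))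
    (t : Dual K A ⊗[K] (Dual K A ⊗[K] Dual K A)) (x₁ x₂ x₃ x₄ x₅ : A) :
    pair5 K A ((coassoc1 μstar α₁.dualMap α₂.dualMap + coassoc2 μstar α₁.dualMap α₂.dualMap
        + coassoc3 μstar α₁.dualMap α₂.dualMap) t) (x₁ ⊗ₜ (x₂ ⊗ₜ (x₃ ⊗ₜ (x₄ ⊗ₜ x₅)))) =
      pair3 K A t (μ x₁ x₂ x₃ ⊗ₜ (α₁ x₄ ⊗ₜ α₂ x₅))
        + pair3 K A t (α₁ x₁ ⊗ₜ (μ x₂ x₃ x₄ ⊗ₜ α₂ x₅))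
        + pair3 K A t (α₁ x₁ ⊗ₜ (α₂ x₂ ⊗ₜ μ x₃ x₄ x₅)) := by
  suffices (pair5 K A).flip (x₁ ⊗ₜ (x₂ ⊗ₜ (x₃ ⊗ₜ (x₄ ⊗ₜ x₅)))) ∘ₗ
      (coassoc1 μstar α₁.dualMap α₂.dualMap + coassoc2 μstar α₁.dualMap α₂.dualMap
        + coassoc3 μstar α₁.dualMap α₂.dualMap) =
      (pair3 K A).flip (μ x₁ x₂ x₃ ⊗ₜ (α₁ x₄ ⊗ₜ α₂ x₅))
        + (pair3 K A).flip (α₁ x₁ ⊗ₜ (μ x₂ x₃ x₄ ⊗ₜ α₂ x₅))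
        + (pair3 K A).flip (α₁ x₁ ⊗ₜ (α₂ x₂ ⊗ₜ μ x₃ x₄ x₅)) from LinearMap.congr_fun this t
  refine ext_threefold' fun f g h => ?_
  simp only [LinearMap.comp_apply, LinearMap.add_apply, map_add, LinearMap.flip_apply,
    pair5_coassoc1_tmul, pair5_coassoc2_tmul, pair5_coassoc3_tmul, hμstar, pair3_tmul,
    LinearMap.dualMap_apply]

theorem pair5_coassociator_comp_apply
    (hμstar : ∀ (ξ : Dual K A) (x y z : A),
      pair3 K A (μstar ξ) (x ⊗ₜ[K] (y ⊗ₜ[K] z)) = ξ (μ x y z))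
    (ξ : Dual K A) (x₁ x₂ x₃ x₄ x₅ : A) :
    pair5 K A ((coassoc1 μstar α₁.dualMap α₂.dualMap + coassoc2 μstar α₁.dualMap α₂.dualMap
        + coassoc3 μstar α₁.dualMap α₂.dualMap).comp μstar ξ)
        (x₁ ⊗ₜ (x₂ ⊗ₜ (x₃ ⊗ₜ (x₄ ⊗ₜ x₅)))) =
      ξ (μ (μ x₁ x₂ x₃) (α₁ x₄) (α₂ x₅) + μ (α₁ x₁) (μ x₂ x₃ x₄) (α₂ x₅)
        + μ (α₁ x₁) (α₂ x₂) (μ x₃ x₄ x₅)) := by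
  rw [LinearMap.comp_apply, pair5_coassociator_apply μ α₁ α₂ μstar hμstar, hμstar, hμstar, hμstar,
    map_add, map_add]

end DualOfTernaryAlgebra

/-- `(A, μ, α₁, α₂)` is a partially hom-associative ternary algebra iff its dual
`(A*, μ*, α₁*, α₂*)` is a partially hom-coassociative ternary coalgebra. -/
theorem stmt7 {K A : Type*} [Field K] [AddCommGroup A] [Module K A]
    [FiniteDimensional K A]
    (μ : A →ₗ[K] A →ₗ[K] A →ₗ[K] A) (α₁ α₂ : A →ₗ[K] A)
    (μstar : Dual K A →ₗ[K] Dual K A ⊗[K] (Dual K A ⊗[K] Dual K A))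
    (hμstar : ∀ (ξ : Dual K A) (x y z : A),
      pair3 K A (μstar ξ) (x ⊗ₜ[K] (y ⊗ₜ[K] z)) = ξ (μ x y z)) :
    (∀ x₁ x₂ x₃ x₄ x₅ : A,
      μ (μ x₁ x₂ x₃) (α₁ x₄) (α₂ x₅) + μ (α₁ x₁) (μ x₂ x₃ x₄) (α₂ x₅)
        + μ (α₁ x₁) (α₂ x₂) (μ x₃ x₄ x₅) = 0) ↔
    (coassoc1 μstar α₁.dualMap α₂.dualMap + coassoc2 μstar α₁.dualMap α₂.dualMap
      + coassoc3 μstar α₁.dualMap α₂.dualMap).comp μstar = 0 := by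
  have key := pair5_coassociator_comp_apply μ α₁ α₂ μstar hμstar
  constructor
  · intro H
    ext ξ : 1
    refine pair5_injective ?_
    rw [LinearMap.zero_apply, map_zero]
    ext x₁ x₂ x₃ x₄ x₅
    simpa [H] using key ξ x₁ x₂ x₃ x₄ x₅
  · intro H x₁ x₂ x₃ x₄ x₅
    refine (Module.forall_dual_apply_eq_zero_iff K _).mp fun ξ => ?_
    simpa [H] using (key ξ x₁ x₂ x₃ x₄ x₅).symm
end

section
/- Let (A, μ, α₁, α₂) be a totally hom-associative ternary algebra and (V, β₁, β₂) a bihom-module with trilinear actions L : A×A×V → V, M : A×V×A → V, R : V×A×A → V. Define on A ⊕ V the ternary product τ(x+a, y+b, z+c) = μ(x,y,z) + L(x,y)(c) + M(x,z)(b) + R(y,z)(a). Then (A⊕V, τ, α₁⊕β₁, α₂⊕β₂) is a totally hom-associative ternary algebra if and only if (L, M, R, β₁, β₂, V) satisfies the quasi-trimodule conditions (Eqs. for L, R, M compatibility): L(α₁a,α₂b)(L(c,d)v) = L(μ(a,b,c),α₁d)β₂v = L(α₁a,μ(b,c,d))β₂v; R(α₁c,α₂d)(R(a,b)v) = R(α₂a,μ(b,c,d))β₁v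 = R(μ(a,b,c),α₂d)β₁v; M(α₁a,α₂d)(L(b,c)v) = L(α₁a,α₂b)(M(c,d)v) = M(μ(a,b,c),α₂d)β₁v; M(α₁a,α₂d)(R(b,c)v) = R(α₁c,α₂d)(M(a,b)v) = M(α₁a,μ(b,c,d))β₂v; R(α₁c,α₂d)(L(a,b)v) = L(α₁a,α₂b)(R(c,d)v) = M(α₁a,α₂d)(M(b,c)v). -/
/-!
The first component of `semidirectTernary` is `μ` itself, so on `A ⊕ V` the first components of
the two identities of total hom-associativity are those of `A`. The second components are sums of
five terms, the `i`-th depending only on the `V`-part of the `i`-th argument. Hence they hold for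
all arguments exactly when they hold termwise, and the five termwise identities are the five
families of quasi-trimodule conditions.
-/

section

variable {K A V : Type*} [Field K] [AddCommGroup A] [Module K A]
  [AddCommGroup V] [Module K V]

/-- The ternary product on `A ⊕ V` built from `μ` and the actions `L, M, R`:
`τ(x+a, y+b, z+c) = μ(x,y,z) + L(x,y)(c) + M(x,z)(b) + R(y,z)(a)`. -/
def semidirectTernary (μ : A →ₗ[K] A →ₗ[K] A →ₗ[K] A)
    (L M R : A →ₗ[K] A →ₗ[K] V →ₗ[K] V) :
    A × V → A × V → A × V → A × V :=
  fun p q r => (μ p.1 q.1 r.1, L p.1 q.1 r.2 + M p.1 r.1 q.2 + R q.1 r.1 p.2)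

/-- The direct sum `α ⊕ β` of structure maps. -/
def sumMap (α : A →ₗ[K] A) (β : V →ₗ[K] V) : A × V → A × V :=
  fun p => (α p.1, β p.2)

def IsTotallyHomAssoc {X : Type*} (m : X → X → X → X) (f g : X → X) : Prop :=
  ∀ x₁ x₂ x₃ x₄ x₅ : X,
    m (m x₁ x₂ x₃) (f x₄) (g x₅) = m (f x₁) (m x₂ x₃ x₄) (g x₅) ∧
    m (f x₁) (m x₂ x₃ x₄) (g x₅) = m (f x₁) (g x₂) (m x₃ x₄ x₅)

def IsQuasiTrimodule (μ : A →ₗ[K] A →ₗ[K] A →ₗ[K] A) (α₁ α₂ : A →ₗ[K] A)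
    (β₁ β₂ : V →ₗ[K] V) (L M R : A →ₗ[K] A →ₗ[K] V →ₗ[K] V) : Prop :=
  ∀ a b c d : A, ∀ v : V,
    (L (α₁ a) (α₂ b) (L c d v) = L (μ a b c) (α₁ d) (β₂ v) ∧
      L (μ a b c) (α₁ d) (β₂ v) = L (α₁ a) (μ b c d) (β₂ v)) ∧
    (R (α₁ c) (α₂ d) (R a b v) = R (α₂ a) (μ b c d) (β₁ v) ∧
      R (α₂ a) (μ b c d) (β₁ v) = R (μ a b c) (α₂ d) (β₁ v)) ∧
    (M (α₁ a) (α₂ d) (L b c v) = L (α₁ a) (α₂ b) (M c d v) ∧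
      L (α₁ a) (α₂ b) (M c d v) = M (μ a b c) (α₂ d) (β₁ v)) ∧
    (M (α₁ a) (α₂ d) (R b c v) = R (α₁ c) (α₂ d) (M a b v) ∧
      R (α₁ c) (α₂ d) (M a b v) = M (α₁ a) (μ b c d) (β₂ v)) ∧
    (R (α₁ c) (α₂ d) (L a b v) = L (α₁ a) (α₂ b) (R c d v) ∧
      L (α₁ a) (α₂ b) (R c d v) = M (α₁ a) (α₂ d) (M b c v))

namespace semidirectTernary

variable (μ : A →ₗ[K] A →ₗ[K] A →ₗ[K] A) (α₁ α₂ : A →ₗ[K] A) (β₁ β₂ : V →ₗ[K] V)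
  (L M R : A →ₗ[K] A →ₗ[K] V →ₗ[K] V) (x₁ x₂ x₃ x₄ x₅ : A) (v₁ v₂ v₃ v₄ v₅ : V)

lemma snd_assoc_left :
    (semidirectTernary μ L M R (semidirectTernary μ L M R (x₁, v₁) (x₂, v₂) (x₃, v₃))
      (sumMap α₁ β₁ (x₄, v₄)) (sumMap α₂ β₂ (x₅, v₅))).2 =
    R (α₁ x₄) (α₂ x₅) (R x₂ x₃ v₁) + R (α₁ x₄) (α₂ x₅) (M x₁ x₃ v₂) +
      R (α₁ x₄) (α₂ x₅) (L x₁ x₂ v₃) + M (μ x₁ x₂ x₃) (α₂ x₅) (β₁ v₄) +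
      L (μ x₁ x₂ x₃) (α₁ x₄) (β₂ v₅) := by
  simp only [semidirectTernary, sumMap, map_add]
  abel

lemma snd_assoc_middle :
    (semidirectTernary μ L M R (sumMap α₁ β₁ (x₁, v₁))
      (semidirectTernary μ L M R (x₂, v₂) (x₃, v₃) (x₄, v₄)) (sumMap α₂ β₂ (x₅, v₅))).2 =
    R (μ x₂ x₃ x₄) (α₂ x₅) (β₁ v₁) + M (α₁ x₁) (α₂ x₅) (R x₃ x₄ v₂) +
      M (α₁ x₁) (α₂ x₅) (M x₂ x₄ v₃) + M (α₁ x₁) (α₂ x₅) (L x₂ x₃ v₄) +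
      L (α₁ x₁) (μ x₂ x₃ x₄) (β₂ v₅) := by
  simp only [semidirectTernary, sumMap, map_add]
  abel

lemma snd_assoc_right :
    (semidirectTernary μ L M R (sumMap α₁ β₁ (x₁, v₁)) (sumMap α₂ β₂ (x₂, v₂))
      (semidirectTernary μ L M R (x₃, v₃) (x₄, v₄) (x₅, v₅))).2 =
    R (α₂ x₂) (μ x₃ x₄ x₅) (β₁ v₁) + M (α₁ x₁) (μ x₃ x₄ x₅) (β₂ v₂) +
      L (α₁ x₁) (α₂ x₂) (R x₄ x₅ v₃) + L (α₁ x₁) (α₂ x₂) (M x₃ x₅ v₄) +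
      L (α₁ x₁) (α₂ x₂) (L x₃ x₄ v₅) := by
  simp only [semidirectTernary, sumMap, map_add]
  abel

end semidirectTernary

open semidirectTernary

variable {μ : A →ₗ[K] A →ₗ[K] A →ₗ[K] A} {α₁ α₂ : A →ₗ[K] A} {β₁ β₂ : V →ₗ[K] V}
  {L M R : A →ₗ[K] A →ₗ[K] V →ₗ[K] V}

lemma IsQuasiTrimodule.of_isTotallyHomAssoc_semidirectTernary
    (h : IsTotallyHomAssoc (semidirectTernary μ L M R) (sumMap α₁ β₁) (sumMap α₂ β₂)) :
    IsQuasiTrimodule μ α₁ α₂ β₁ β₂ L M R := by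
  intro a b c d v
  -- With a single nonzero `V`-part, in slot `i`, only the `i`-th term survives.
  have slot (p₁ p₂ p₃ p₄ p₅ : A × V) := And.imp (congrArg Prod.snd) (congrArg Prod.snd)
    (h p₁ p₂ p₃ p₄ p₅)
  have hR := slot (0, v) (a, 0) (b, 0) (c, 0) (d, 0)
  have hMR := slot (a, 0) (0, v) (b, 0) (c, 0) (d, 0)
  have hRL := slot (a, 0) (b, 0) (0, v) (c, 0) (d, 0)
  have hML := slot (a, 0) (b, 0) (c, 0) (0, v) (d, 0)
  have hL := slot (a, 0) (b, 0) (c, 0) (d, 0) (0, v)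
  simp only [snd_assoc_left, snd_assoc_middle, snd_assoc_right, map_zero,
    LinearMap.zero_apply, add_zero, zero_add] at hR hMR hRL hML hL
  exact ⟨⟨hL.2.symm.trans hL.1.symm, hL.1⟩, ⟨hR.1.trans hR.2, hR.2.symm⟩,
    ⟨hML.2, hML.2.symm.trans hML.1.symm⟩, ⟨hMR.1.symm, hMR.1.trans hMR.2⟩,
    ⟨hRL.1.trans hRL.2, hRL.2.symm⟩⟩

lemma IsQuasiTrimodule.isTotallyHomAssoc_semidirectTernary
    (htot : IsTotallyHomAssoc (fun x y z => μ x y z) α₁ α₂)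
    (h : IsQuasiTrimodule μ α₁ α₂ β₁ β₂ L M R) :
    IsTotallyHomAssoc (semidirectTernary μ L M R) (sumMap α₁ β₁) (sumMap α₂ β₂) := by
  rintro ⟨x₁, v₁⟩ ⟨x₂, v₂⟩ ⟨x₃, v₃⟩ ⟨x₄, v₄⟩ ⟨x₅, v₅⟩
  obtain ⟨-, ⟨hR₁, hR₂⟩, -, -, -⟩ := h x₂ x₃ x₄ x₅ v₁
  obtain ⟨-, -, -, ⟨hMR₁, hMR₂⟩, -⟩ := h x₁ x₃ x₄ x₅ v₂
  obtain ⟨-, -, -, -, ⟨hRL₁, hRL₂⟩⟩ := h x₁ x₂ x₄ x₅ v₃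
  obtain ⟨-, -, ⟨hML₁, hML₂⟩, -, -⟩ := h x₁ x₂ x₃ x₅ v₄
  obtain ⟨⟨hL₁, hL₂⟩, -, -, -, -⟩ := h x₁ x₂ x₃ x₄ v₅
  refine ⟨Prod.ext (htot x₁ x₂ x₃ x₄ x₅).1 ?_, Prod.ext (htot x₁ x₂ x₃ x₄ x₅).2 ?_⟩
  · rw [snd_assoc_left, snd_assoc_middle]
    exact congr($(hR₁.trans hR₂) + $(hMR₁.symm) + $(hRL₁.trans hRL₂) +
      $((hML₁.trans hML₂).symm) + $hL₂)
  · rw [snd_assoc_middle, snd_assoc_right]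
    exact congr($(hR₂.symm) + $(hMR₁.trans hMR₂) + $(hRL₂.symm) + $hML₁ + $((hL₁.trans hL₂).symm))

/-- `(L, M, R, β₁, β₂, V)` is a quasi-trimodule of the totally hom-associative
ternary algebra `(A, μ, α₁, α₂)` iff `A ⊕ V` with the semidirect ternary product
is totally hom-associative. -/
theorem stmt11 (μ : A →ₗ[K] A →ₗ[K] A →ₗ[K] A) (α₁ α₂ : A →ₗ[K] A)
    (β₁ β₂ : V →ₗ[K] V) (L M R : A →ₗ[K] A →ₗ[K] V →ₗ[K] V)
    (htot : ∀ x₁ x₂ x₃ x₄ x₅ : A,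
      μ (μ x₁ x₂ x₃) (α₁ x₄) (α₂ x₅) = μ (α₁ x₁) (μ x₂ x₃ x₄) (α₂ x₅) ∧
      μ (α₁ x₁) (μ x₂ x₃ x₄) (α₂ x₅) = μ (α₁ x₁) (α₂ x₂) (μ x₃ x₄ x₅)) :
    (∀ p₁ p₂ p₃ p₄ p₅ : A × V,
      semidirectTernary μ L M R (semidirectTernary μ L M R p₁ p₂ p₃)
          (sumMap α₁ β₁ p₄) (sumMap α₂ β₂ p₅)
        = semidirectTernary μ L M R (sumMap α₁ β₁ p₁)
            (semidirectTernary μ L M R p₂ p₃ p₄) (sumMap α₂ β₂ p₅) ∧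
      semidirectTernary μ L M R (sumMap α₁ β₁ p₁)
          (semidirectTernary μ L M R p₂ p₃ p₄) (sumMap α₂ β₂ p₅)
        = semidirectTernary μ L M R (sumMap α₁ β₁ p₁) (sumMap α₂ β₂ p₂)
            (semidirectTernary μ L M R p₃ p₄ p₅)) ↔
    (∀ a b c d : A, ∀ v : V,
      (L (α₁ a) (α₂ b) (L c d v) = L (μ a b c) (α₁ d) (β₂ v) ∧
        L (μ a b c) (α₁ d) (β₂ v) = L (α₁ a) (μ b c d) (β₂ v)) ∧
      (R (α₁ c) (α₂ d) (R a b v) = R (α₂ a) (μ b c d) (β₁ v) ∧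
        R (α₂ a) (μ b c d) (β₁ v) = R (μ a b c) (α₂ d) (β₁ v)) ∧
      (M (α₁ a) (α₂ d) (L b c v) = L (α₁ a) (α₂ b) (M c d v) ∧
        L (α₁ a) (α₂ b) (M c d v) = M (μ a b c) (α₂ d) (β₁ v)) ∧
      (M (α₁ a) (α₂ d) (R b c v) = R (α₁ c) (α₂ d) (M a b v) ∧
        R (α₁ c) (α₂ d) (M a b v) = M (α₁ a) (μ b c d) (β₂ v)) ∧
      (R (α₁ c) (α₂ d) (L a b v) = L (α₁ a) (α₂ b) (R c d v) ∧
        L (α₁ a) (α₂ b) (R c d v) = M (α₁ a) (α₂ d) (M b c v))) :=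
  ⟨IsQuasiTrimodule.of_isTotallyHomAssoc_semidirectTernary,
    IsQuasiTrimodule.isTotallyHomAssoc_semidirectTernary htot⟩

end
end

section
/- Let P = K² with basis {e₁, e₂}, ternary product μ(e₁,e₁,e₁) = e₂ (all other basis products zero), coproduct Δ(e₁) = e₂⊗e₂⊗e₂, Δ(e₂) = 0, and linear map ρ with ρ(e₁) = e₁ + e₂, ρ(e₂) = e₂, with α₁ = α₂ = ρ. Then (P, Δ, ρ, ρ) is a partially hom-coassociative ternary coalgebra: (Δ⊗ρ⊗ρ + ρ⊗Δ⊗ρ + ρ⊗ρ⊗Δ) ∘ Δ = 0. -/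
/-! Every value of `Δ` is a multiple of `e₂ ⊗ e₂ ⊗ e₂`, and each of the three terms of the
coassociator applies `Δ` to one tensor factor of it, where `Δ e₂ = 0`. -/

open TensorProduct Module

section Coassociator

variable {K M : Type*} [Field K] [AddCommGroup M] [Module K M]

theorem coassoc_sum_tmul_self_eq_zero {Δ : M →ₗ[K] M ⊗[K] (M ⊗[K] M)} (α₁ α₂ : M →ₗ[K] M)
    {v : M} (hv : Δ v = 0) :
    (coassoc1 Δ α₁ α₂ + coassoc2 Δ α₁ α₂ + coassoc3 Δ α₁ α₂) (v ⊗ₜ (v ⊗ₜ v)) = 0 := by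
  simp [coassoc1, coassoc2, coassoc3, hv]

theorem coassoc_sum_comp_eq_zero_of_map_mem_span {Δ : M →ₗ[K] M ⊗[K] (M ⊗[K] M)}
    (α₁ α₂ : M →ₗ[K] M) {v : M} (hv : Δ v = 0)
    (hΔ : ∀ x, Δ x ∈ K ∙ v ⊗ₜ[K] (v ⊗ₜ[K] v)) :
    (coassoc1 Δ α₁ α₂ + coassoc2 Δ α₁ α₂ + coassoc3 Δ α₁ α₂).comp Δ = 0 := by
  ext x
  obtain ⟨c, hc⟩ := Submodule.mem_span_singleton.mp (hΔ x)
  rw [LinearMap.comp_apply, ← hc, map_smul, coassoc_sum_tmul_self_eq_zero α₁ α₂ hv, smul_zero,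
    LinearMap.zero_apply]

end Coassociator

theorem Prod.eq_smul_inl_add_smul_inr {K : Type*} [Semiring K] (x : K × K) :
    x = x.1 • ((1, 0) : K × K) + x.2 • ((0, 1) : K × K) := by
  simp

theorem stmt14_general {K : Type*} [Field K]
    (Δ : (K × K) →ₗ[K] (K × K) ⊗[K] ((K × K) ⊗[K] (K × K)))
    (e : Fin 2 → K × K) (he0 : e 0 = (1, 0)) (he1 : e 1 = (0, 1))
    (hΔ0 : Δ (e 0) = e 1 ⊗ₜ[K] (e 1 ⊗ₜ[K] e 1)) (hΔ1 : Δ (e 1) = 0)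
    (ρ : (K × K) →ₗ[K] (K × K)) :
    (coassoc1 Δ ρ ρ + coassoc2 Δ ρ ρ + coassoc3 Δ ρ ρ).comp Δ = 0 := by
  refine coassoc_sum_comp_eq_zero_of_map_mem_span ρ ρ hΔ1 fun x => ?_
  have hΔx : Δ x = x.1 • (e 1 ⊗ₜ[K] (e 1 ⊗ₜ[K] e 1)) := by
    conv_lhs => rw [Prod.eq_smul_inl_add_smul_inr x, ← he0, ← he1]
    rw [map_add, map_smul, map_smul, hΔ0, hΔ1, smul_zero, add_zero]
  rw [hΔx]
  exact Submodule.smul_mem _ _ (Submodule.mem_span_singleton_self _)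

/-- The coproduct `Δ(e₁) = e₂⊗e₂⊗e₂`, `Δ(e₂) = 0` with `ρ(e₁) = e₁ + e₂`,
`ρ(e₂) = e₂` is a partially hom-coassociative ternary coalgebra on `K²`. -/
theorem stmt14 {K : Type*} [Field K] [CharZero K]
    (Δ : (K × K) →ₗ[K] (K × K) ⊗[K] ((K × K) ⊗[K] (K × K)))
    (e : Fin 2 → K × K) (he0 : e 0 = (1, 0)) (he1 : e 1 = (0, 1))
    (hΔ0 : Δ (e 0) = e 1 ⊗ₜ[K] (e 1 ⊗ₜ[K] e 1)) (hΔ1 : Δ (e 1) = 0)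
    (ρ : (K × K) →ₗ[K] (K × K))
    (hρ0 : ρ (e 0) = e 0 + e 1) (hρ1 : ρ (e 1) = e 1) :
    (coassoc1 Δ ρ ρ + coassoc2 Δ ρ ρ + coassoc3 Δ ρ ρ).comp Δ = 0 :=
  stmt14_general Δ e he0 he1 hΔ0 hΔ1 ρ
end

section
/- Let P = K² with trilinear product μ(e₁,e₁,e₁) = e₂ (all other basis products zero), coproduct Δ(e₁) = e₂⊗e₂⊗e₂, Δ(e₂) = 0, and ρ(e₁) = e₁ + e₂, ρ(e₂) = e₂. Then the compatibility condition Δ(μ(x,y,z)) = (L(ρx,ρy)⊗ρ⊗ρ)Δ(z) + (ρ⊗M(ρx,ρz)⊗ρ)Δ(y) + (ρ⊗ρ⊗R(ρy,ρz))Δ(x) holds for all x, y, z ∈ P, where L(x,y)(w)=μ(x,y,w), M(x,y)(w)=μ(x,w,y), R(x,y)(w)=μ(w,x,y); i.e., (P, μ, Δ, ρ, ρ) is a partially hom-associative ternary infinitesimal bialgebra. -/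
open TensorProduct Module

section NullBialgebra

variable {K M : Type*} [Field K] [AddCommGroup M] [Module K M]
  {μ : M →ₗ[K] M →ₗ[K] M →ₗ[K] M} {Δ : M →ₗ[K] M ⊗[K] (M ⊗[K] M)}
  {φ : M →ₗ[K] K} {v : M}

theorem homAssoc_of_mul_eq_smul (hv : φ v = 0)
    (hμ : ∀ x y z, μ x y z = (φ x * φ y * φ z) • v) (α₁ α₂ : M →ₗ[K] M)
    (x₁ x₂ x₃ x₄ x₅ : M) :
    μ (μ x₁ x₂ x₃) (α₁ x₄) (α₂ x₅) + μ (α₁ x₁) (μ x₂ x₃ x₄) (α₂ x₅)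
      + μ (α₁ x₁) (α₂ x₂) (μ x₃ x₄ x₅) = 0 := by
  simp [hμ, hv]

theorem homCoassoc_of_comul_eq_smul (hv : φ v = 0)
    (hΔ : ∀ x, Δ x = φ x • v ⊗ₜ[K] (v ⊗ₜ[K] v)) (α₁ α₂ : M →ₗ[K] M) :
    (coassoc1 Δ α₁ α₂ + coassoc2 Δ α₁ α₂ + coassoc3 Δ α₁ α₂).comp Δ = 0 := by
  have hΔv : Δ v = 0 := by simp [hΔ, hv]
  ext x
  simp [hΔ x, coassoc1, coassoc2, coassoc3, hΔv]

theorem compatibility_of_mul_comul_eq_smul (hv : φ v = 0)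
    (hμ : ∀ x y z, μ x y z = (φ x * φ y * φ z) • v)
    (hΔ : ∀ x, Δ x = φ x • v ⊗ₜ[K] (v ⊗ₜ[K] v)) (α₁ α₂ : M →ₗ[K] M) (x y z : M) :
    Δ (μ x y z)
      = TensorProduct.map (μ (α₁ x) (α₂ y)) (TensorProduct.map α₁ α₂) (Δ z)
        + TensorProduct.map α₁ (TensorProduct.map ((μ (α₁ x)).flip (α₂ z)) α₂) (Δ y)
        + TensorProduct.map α₁ (TensorProduct.map α₂ ((μ.flip (α₁ y)).flip (α₂ z))) (Δ x) := by
  simp [hμ, hΔ, hv]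

end NullBialgebra

theorem stmt15_general {K : Type*} [Field K]
    (μ : (K × K) →ₗ[K] (K × K) →ₗ[K] (K × K) →ₗ[K] (K × K))
    (Δ : (K × K) →ₗ[K] (K × K) ⊗[K] ((K × K) ⊗[K] (K × K)))
    (e : Fin 2 → K × K) (he0 : e 0 = (1, 0)) (he1 : e 1 = (0, 1))
    (hμ : ∀ i j k : Fin 2, μ (e i) (e j) (e k) =
      if i = 0 ∧ j = 0 ∧ k = 0 then e 1 else 0)
    (hΔ0 : Δ (e 0) = e 1 ⊗ₜ[K] (e 1 ⊗ₜ[K] e 1)) (hΔ1 : Δ (e 1) = 0)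
    (ρ : (K × K) →ₗ[K] (K × K)) :
    (∀ x₁ x₂ x₃ x₄ x₅ : K × K,
      μ (μ x₁ x₂ x₃) (ρ x₄) (ρ x₅) + μ (ρ x₁) (μ x₂ x₃ x₄) (ρ x₅)
        + μ (ρ x₁) (ρ x₂) (μ x₃ x₄ x₅) = 0) ∧
    (coassoc1 Δ ρ ρ + coassoc2 Δ ρ ρ + coassoc3 Δ ρ ρ).comp Δ = 0 ∧
    (∀ x y z : K × K,
      Δ (μ x y z)
        = TensorProduct.map (μ (ρ x) (ρ y)) (TensorProduct.map ρ ρ) (Δ z)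
          + TensorProduct.map ρ (TensorProduct.map ((μ (ρ x)).flip (ρ z)) ρ) (Δ y)
          + TensorProduct.map ρ (TensorProduct.map ρ ((μ.flip (ρ y)).flip (ρ z))) (Δ x)) := by
  have hdecomp (x : K × K) : x = x.1 • e 0 + x.2 • e 1 := by
    simp [he0, he1]
  have hv : LinearMap.fst K K K (e 1) = 0 := by simp [he1]
  have hμ' (x y z : K × K) : μ x y z = (x.1 * y.1 * z.1) • e 1 := by
    conv_lhs => rw [hdecomp x, hdecomp y, hdecomp z]
    simp [hμ, smul_smul, mul_assoc]
  have hΔ' (x : K × K) : Δ x = x.1 • e 1 ⊗ₜ[K] (e 1 ⊗ₜ[K] e 1) := by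
    conv_lhs => rw [hdecomp x]
    simp [hΔ0, hΔ1]
  exact ⟨homAssoc_of_mul_eq_smul (φ := LinearMap.fst K K K) hv hμ' ρ ρ,
    homCoassoc_of_comul_eq_smul (φ := LinearMap.fst K K K) hv hΔ' ρ ρ,
    compatibility_of_mul_comul_eq_smul (φ := LinearMap.fst K K K) hv hμ' hΔ' ρ ρ⟩

/-- `(P, μ, Δ, ρ, ρ)` with `μ(e₁,e₁,e₁) = e₂`, `Δ(e₁) = e₂⊗e₂⊗e₂`, `Δ(e₂) = 0`,
`ρ(e₁) = e₁+e₂`, `ρ(e₂) = e₂` is a partially hom-associative ternary infinitesimal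
bialgebra; in particular the compatibility condition holds. -/
theorem stmt15 {K : Type*} [Field K] [CharZero K]
    (μ : (K × K) →ₗ[K] (K × K) →ₗ[K] (K × K) →ₗ[K] (K × K))
    (Δ : (K × K) →ₗ[K] (K × K) ⊗[K] ((K × K) ⊗[K] (K × K)))
    (e : Fin 2 → K × K) (he0 : e 0 = (1, 0)) (he1 : e 1 = (0, 1))
    (hμ : ∀ i j k : Fin 2, μ (e i) (e j) (e k) =
      if i = 0 ∧ j = 0 ∧ k = 0 then e 1 else 0)
    (hΔ0 : Δ (e 0) = e 1 ⊗ₜ[K] (e 1 ⊗ₜ[K] e 1)) (hΔ1 : Δ (e 1) = 0)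
    (ρ : (K × K) →ₗ[K] (K × K))
    (hρ0 : ρ (e 0) = e 0 + e 1) (hρ1 : ρ (e 1) = e 1) :
    (∀ x₁ x₂ x₃ x₄ x₅ : K × K,
      μ (μ x₁ x₂ x₃) (ρ x₄) (ρ x₅) + μ (ρ x₁) (μ x₂ x₃ x₄) (ρ x₅)
        + μ (ρ x₁) (ρ x₂) (μ x₃ x₄ x₅) = 0) ∧
    (coassoc1 Δ ρ ρ + coassoc2 Δ ρ ρ + coassoc3 Δ ρ ρ).comp Δ = 0 ∧
    (∀ x y z : K × K,
      Δ (μ x y z)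
        = TensorProduct.map (μ (ρ x) (ρ y)) (TensorProduct.map ρ ρ) (Δ z)
          + TensorProduct.map ρ (TensorProduct.map ((μ (ρ x)).flip (ρ z)) ρ) (Δ y)
          + TensorProduct.map ρ (TensorProduct.map ρ ((μ.flip (ρ y)).flip (ρ z))) (Δ x)) :=
  stmt15_general μ Δ e he0 he1 hμ hΔ0 hΔ1 ρ
end
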